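/- Let k ≥ 2 be an integer. Then p(r) tends to L := −(k+1)(k+2) ∫₀¹ ((1−t)/t)^{1/(k+1)} dt as r → +∞, and also as r → −∞; moreover L < 0. -/

import Mathlib

open Real MeasureTheory Set intervalIntegral Filter

noncomputable def Wfn (k : ℕ) (r t : ℝ) : ℝ :=
  (t * (t + r ^ 2) / (1 - t)) ^ ((1 : ℝ) / ((k : ℝ) + 1))

noncomputable def a₀ (k : ℕ) (r : ℝ) : ℝ :=
  -((k : ℝ) + 1) * ((k : ℝ) + 2) * r ^ 2 + 2 * (k : ℝ) * ((k : ℝ) + 2) * r - (k : ℝ) * ((k : ℝ) - 1)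

noncomputable def a₁ (k : ℕ) : ℝ := 2 * (2 * (k : ℝ) + 1)

noncomputable def periodP (k : ℕ) (r : ℝ) : ℝ :=
  |r| ^ (-(2 * (k : ℝ)) / ((k : ℝ) + 1)) *
    ∫ t in (0 : ℝ)..1, (a₀ k r - a₁ k * t) / Wfn k r t

noncomputable def Lval (k : ℕ) : ℝ :=
  -(((k : ℝ) + 1) * ((k : ℝ) + 2)) *
    ∫ t in (0 : ℝ)..1, ((1 - t) / t) ^ ((1 : ℝ) / ((k : ℝ) + 1))

/-! ### Auxiliary material -/

lemma aux_c_pos (k : ℕ) : 0 < (1 : ℝ) / ((k : ℝ) + 1) := by positivity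

/-- The key algebraic identity rewriting the scaled integrand. -/
lemma aux_F_eq (k : ℕ) {r t : ℝ} (hr : r ≠ 0) (ht : t ∈ Ioc (0:ℝ) 1) :
    |r| ^ (-(2 * (k : ℝ)) / ((k : ℝ) + 1)) * ((a₀ k r - a₁ k * t) / Wfn k r t)
      = ((1 - t) / t) ^ ((1 : ℝ) / ((k : ℝ) + 1)) * ((a₀ k r - a₁ k * t) / r ^ 2)
          * (r ^ 2 / (t + r ^ 2)) ^ ((1 : ℝ) / ((k : ℝ) + 1)) := by
  set c : ℝ := (1 : ℝ) / ((k : ℝ) + 1) with hcdef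
  have hcpos : 0 < c := aux_c_pos k
  have hcne : ((k : ℝ) + 1)⁻¹ ≠ 0 := by positivity
  rcases eq_or_lt_of_le ht.2 with h1 | h1
  · -- t = 1 : both sides are zero
    subst h1
    have hW : Wfn k r 1 = 0 := by
      simp [Wfn, sub_self, div_zero, Real.zero_rpow hcne]
    simp [hW, ← hcdef, Real.zero_rpow hcpos.ne']
  · have ht0 : 0 < t := ht.1
    have h1t : 0 < 1 - t := by linarith
    have hr2 : (0:ℝ) < r ^ 2 := by positivity
    have htr : 0 < t + r ^ 2 := by positivity
    have hW : Wfn k r t = (t / (1 - t)) ^ c * (t + r ^ 2) ^ c := by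
      rw [Wfn, show t * (t + r ^ 2) / (1 - t) = t / (1 - t) * (t + r ^ 2) by ring,
        Real.mul_rpow (by positivity) (by positivity)]
    have habs : |r| ^ (-(2 * (k : ℝ)) / ((k : ℝ) + 1)) = (r ^ 2) ^ c / r ^ 2 := by
      have hra : (0:ℝ) < |r| := abs_pos.mpr hr
      have hk1 : ((k : ℝ) + 1) ≠ 0 := by positivity
      have he : -(2 * (k : ℝ)) / ((k : ℝ) + 1) = 2 * c + (-2) := by
        rw [hcdef]; field_simp; ring
      have h2 : |r| ^ ((2:ℝ)) = r ^ 2 := by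
        rw [show (2:ℝ) = ((2:ℕ):ℝ) by norm_num, Real.rpow_natCast, sq_abs]
      have hneg2 : |r| ^ ((-2:ℝ)) = (r ^ 2)⁻¹ := by
        rw [show (-2:ℝ) = -((2:ℕ):ℝ) by norm_num, Real.rpow_neg (abs_nonneg r),
          Real.rpow_natCast, sq_abs]
      rw [he, Real.rpow_add hra, Real.rpow_mul (abs_nonneg r), h2, hneg2, div_eq_mul_inv]
    have hA : (0:ℝ) < (t / (1 - t)) ^ c := Real.rpow_pos_of_pos (by positivity) _
    have hB : (0:ℝ) < (t + r ^ 2) ^ c := Real.rpow_pos_of_pos htr _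
    rw [hW, habs, Real.div_rpow (le_of_lt hr2) (le_of_lt htr),
      show (1 - t) / t = (t / (1 - t))⁻¹ by rw [inv_div],
      Real.inv_rpow (by positivity)]
    field_simp

/-- Bound constant. -/
noncomputable def auxC (k : ℕ) : ℝ :=
  ((k : ℝ) + 1) * ((k : ℝ) + 2) + 2 * (k : ℝ) * ((k : ℝ) + 2) + (k : ℝ) * ((k : ℝ) - 1)
    + 2 * (2 * (k : ℝ) + 1)

lemma aux_C_nonneg (k : ℕ) (hk : 2 ≤ k) : (0:ℝ) ≤ auxC k := by
  have hK : (2:ℝ) ≤ (k:ℝ) := by exact_mod_cast hk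
  simp only [auxC]; nlinarith

lemma aux_bound (k : ℕ) (hk : 2 ≤ k) {r t : ℝ} (hr : 1 ≤ |r|) (ht : t ∈ Ioc (0:ℝ) 1) :
    ‖|r| ^ (-(2 * (k : ℝ)) / ((k : ℝ) + 1)) * ((a₀ k r - a₁ k * t) / Wfn k r t)‖
      ≤ auxC k * ((1 - t) / t) ^ ((1 : ℝ) / ((k : ℝ) + 1)) := by
  have hr0 : r ≠ 0 := by
    intro h; rw [h] at hr; simp at hr; linarith
  set c : ℝ := (1 : ℝ) / ((k : ℝ) + 1) with hcdef
  have hcpos : 0 < c := aux_c_pos k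
  have hr2 : (0:ℝ) < r ^ 2 := by positivity
  have hr2' : (1:ℝ) ≤ r ^ 2 := by
    nlinarith [sq_abs r, abs_nonneg r]
  have hrabs : |r| ≤ r ^ 2 := by
    calc |r| = |r| * 1 := by ring
    _ ≤ |r| * |r| := by nlinarith [abs_nonneg r]
    _ = r ^ 2 := by rw [← sq_abs]; ring
  have hK : (2:ℝ) ≤ (k:ℝ) := by exact_mod_cast hk
  have ht0 : 0 < t := ht.1
  have ht1 : t ≤ 1 := ht.2
  have habs_r : -|r| ≤ r ∧ r ≤ |r| := ⟨neg_abs_le r, le_abs_self r⟩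
  have hcoef : (0:ℝ) ≤ 2 * (k:ℝ) * ((k:ℝ) + 2) := by positivity
  have hrr : r ≤ r ^ 2 := le_trans habs_r.2 hrabs
  have hrr' : -(r ^ 2) ≤ r := by linarith [habs_r.1, hrabs]
  have h5 : 2 * (k:ℝ) * ((k:ℝ) + 2) * r ≤ 2 * (k:ℝ) * ((k:ℝ) + 2) * r ^ 2 :=
    mul_le_mul_of_nonneg_left hrr hcoef
  have h6 : -(2 * (k:ℝ) * ((k:ℝ) + 2) * r ^ 2) ≤ 2 * (k:ℝ) * ((k:ℝ) + 2) * r := by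
    have := mul_le_mul_of_nonneg_left hrr' hcoef
    nlinarith [this]
  have hKK : (0:ℝ) ≤ (k:ℝ) * ((k:ℝ) - 1) := mul_nonneg (by linarith) (by linarith)
  have hKKr : (k:ℝ) * ((k:ℝ) - 1) ≤ (k:ℝ) * ((k:ℝ) - 1) * r ^ 2 :=
    le_mul_of_one_le_right hKK hr2'
  have htc : 2 * (2 * (k:ℝ) + 1) * t ≤ 2 * (2 * (k:ℝ) + 1) * r ^ 2 :=
    mul_le_mul_of_nonneg_left (ht1.trans hr2') (by positivity)
  have htc0 : (0:ℝ) ≤ 2 * (2 * (k:ℝ) + 1) * t := mul_nonneg (by positivity) ht0.le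
  have hA1 : (0:ℝ) ≤ ((k:ℝ) + 1) * ((k:ℝ) + 2) * r ^ 2 := by positivity
  have hA2 : (0:ℝ) ≤ 2 * (2 * (k:ℝ) + 1) * r ^ 2 := by positivity
  have hA3 : (0:ℝ) ≤ (k:ℝ) * ((k:ℝ) - 1) * r ^ 2 := mul_nonneg hKK hr2.le
  have hXle : |a₀ k r - a₁ k * t| ≤ auxC k * r ^ 2 := by
    rw [abs_le]
    constructor
    · simp only [a₀, a₁, auxC]; linarith [h6, hKKr, htc, hA1]
    · simp only [a₀, a₁, auxC]; linarith [h5, hKK, htc0, hA1, hA2, hA3]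
  have hh : (0:ℝ) ≤ ((1 - t) / t) ^ c := by
    apply Real.rpow_nonneg
    have : 0 ≤ 1 - t := by linarith
    positivity
  have hq0 : (0:ℝ) ≤ (r ^ 2 / (t + r ^ 2)) ^ c := Real.rpow_nonneg (by positivity) _
  have hq1 : (r ^ 2 / (t + r ^ 2)) ^ c ≤ 1 := by
    apply Real.rpow_le_one (by positivity) _ hcpos.le
    rw [div_le_one (by positivity)]; linarith
  rw [aux_F_eq k hr0 ht, ← hcdef]
  rw [Real.norm_eq_abs, abs_mul, abs_mul, abs_of_nonneg hh, abs_of_nonneg hq0, abs_div,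
    abs_of_nonneg hr2.le]
  have h1 : |a₀ k r - a₁ k * t| / r ^ 2 ≤ auxC k := by
    rw [div_le_iff₀ hr2]; exact hXle
  calc ((1 - t) / t) ^ c * (|a₀ k r - a₁ k * t| / r ^ 2) * (r ^ 2 / (t + r ^ 2)) ^ c
      ≤ ((1 - t) / t) ^ c * auxC k * 1 :=
        mul_le_mul (mul_le_mul_of_nonneg_left h1 hh) hq1 hq0
          (mul_nonneg hh (aux_C_nonneg k hk))
    _ = auxC k * ((1 - t) / t) ^ c := by ring

/-- Integrability of the bound profile. -/
lemma aux_h_integrable (k : ℕ) (hk : 2 ≤ k) :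
    IntervalIntegrable (fun t => ((1 - t) / t) ^ ((1 : ℝ) / ((k : ℝ) + 1))) volume 0 1 := by
  set c : ℝ := (1 : ℝ) / ((k : ℝ) + 1) with hcdef
  have hcpos : 0 < c := aux_c_pos k
  have hc1 : c < 1 := by
    rw [hcdef, div_lt_one (by positivity)]
    have : (2:ℝ) ≤ (k:ℝ) := by exact_mod_cast hk
    linarith
  apply IntervalIntegrable.mono_fun (intervalIntegrable_rpow' (show (-1:ℝ) < -c by linarith))
  · apply Measurable.aestronglyMeasurable; fun_prop
  · filter_upwards [ae_restrict_mem measurableSet_uIoc] with t ht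
    rw [uIoc_of_le (by norm_num : (0:ℝ) ≤ 1)] at ht
    have ht0 : 0 < t := ht.1
    have ht1 : t ≤ 1 := ht.2
    have h1t : 0 ≤ 1 - t := by linarith
    have hbase : (0:ℝ) ≤ (1 - t) / t := by positivity
    have hle : ((1 - t) / t) ^ c ≤ t ^ (-c) := by
      rw [Real.rpow_neg ht0.le, ← Real.inv_rpow ht0.le]
      apply Real.rpow_le_rpow hbase _ hcpos.le
      rw [div_le_iff₀ ht0, inv_mul_cancel₀ ht0.ne']
      linarith
    rw [Real.norm_eq_abs, Real.norm_eq_abs, abs_of_nonneg (Real.rpow_nonneg hbase _),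
      abs_of_nonneg (Real.rpow_nonneg ht0.le _)]
    exact hle

lemma aux_inv_atBot : Tendsto (fun r : ℝ => r⁻¹) atBot (nhds 0) := by
  have := (tendsto_inv_atTop_zero (𝕜 := ℝ)).comp tendsto_neg_atBot_atTop
  simpa [Function.comp] using this.neg

/-- The common convergence lemma along a filter on which `|r| → ∞`. -/
lemma aux_tendsto (k : ℕ) (hk : 2 ≤ k) {l : Filter ℝ} [l.IsCountablyGenerated]
    (hinv : Tendsto (fun r : ℝ => r⁻¹) l (nhds 0))
    (hev : ∀ᶠ r in l, 1 ≤ |r|) :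
    Tendsto (periodP k) l (nhds (Lval k)) := by
  set c : ℝ := (1 : ℝ) / ((k : ℝ) + 1) with hcdef
  have hcpos : 0 < c := aux_c_pos k
  set F : ℝ → ℝ → ℝ := fun r t =>
    |r| ^ (-(2 * (k : ℝ)) / ((k : ℝ) + 1)) * ((a₀ k r - a₁ k * t) / Wfn k r t) with hFdef
  set f : ℝ → ℝ := fun t => -(((k : ℝ) + 1) * ((k : ℝ) + 2)) * ((1 - t) / t) ^ c with hfdef
  have hP : periodP k = fun r => ∫ t in (0:ℝ)..1, F r t := by
    funext r
    exact (intervalIntegral.integral_const_mul _ _).symm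
  have hL : Lval k = ∫ t in (0:ℝ)..1, f t := by
    exact (intervalIntegral.integral_const_mul _ _).symm
  rw [hP, hL]
  apply intervalIntegral.tendsto_integral_filter_of_dominated_convergence
    (bound := fun t => auxC k * ((1 - t) / t) ^ c)
  · -- measurability
    apply Eventually.of_forall
    intro r
    apply Measurable.aestronglyMeasurable
    simp only [hFdef, Wfn, a₀, a₁]
    fun_prop
  · -- bound
    filter_upwards [hev] with r hr
    apply ae_of_all
    intro t ht
    rw [uIoc_of_le (by norm_num : (0:ℝ) ≤ 1)] at ht
    exact aux_bound k hk hr ht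
  · exact (aux_h_integrable k hk).const_mul _
  · -- pointwise limit
    apply ae_of_all
    intro t ht
    rw [uIoc_of_le (by norm_num : (0:ℝ) ≤ 1)] at ht
    have hne : ∀ᶠ r in l, r ≠ 0 := by
      filter_upwards [hev] with r hr
      intro h; rw [h] at hr; simp at hr; linarith
    have hcne : ((k : ℝ) + 1)⁻¹ ≠ 0 := by positivity
    rcases eq_or_lt_of_le ht.2 with h1 | h1
    · -- t = 1 : everything is 0
      subst h1
      have hF1 : ∀ r : ℝ, F r 1 = 0 := by
        intro r
        have hW : Wfn k r 1 = 0 := by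
          simp [Wfn, sub_self, div_zero, Real.zero_rpow hcne]
        simp [hFdef, hW]
      have hf1 : f 1 = 0 := by
        simp [hfdef, Real.zero_rpow hcpos.ne']
      simp only [hF1, hf1]
      exact tendsto_const_nhds
    · have ht0 : 0 < t := ht.1
      have h1t : 0 < 1 - t := by linarith
      -- limit of the middle factor
      have hA : Tendsto (fun r : ℝ => (a₀ k r - a₁ k * t) / r ^ 2) l
          (nhds (-(((k : ℝ) + 1) * ((k : ℝ) + 2)))) := by
        have heq : ∀ᶠ r in l, -(((k : ℝ) + 1) * ((k : ℝ) + 2))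
            + 2 * (k : ℝ) * ((k : ℝ) + 2) * r⁻¹
            - ((k : ℝ) * ((k : ℝ) - 1) + a₁ k * t) * (r⁻¹) ^ 2
            = (a₀ k r - a₁ k * t) / r ^ 2 := by
          filter_upwards [hne] with r hr
          field_simp [a₀]
          simp only [a₀]
          ring
        have hlim : Tendsto (fun r : ℝ => -(((k : ℝ) + 1) * ((k : ℝ) + 2))
            + 2 * (k : ℝ) * ((k : ℝ) + 2) * r⁻¹
            - ((k : ℝ) * ((k : ℝ) - 1) + a₁ k * t) * (r⁻¹) ^ 2) l
            (nhds (-(((k : ℝ) + 1) * ((k : ℝ) + 2)) + 2 * (k : ℝ) * ((k : ℝ) + 2) * 0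
              - ((k : ℝ) * ((k : ℝ) - 1) + a₁ k * t) * 0 ^ 2)) := by
          exact (tendsto_const_nhds.add (hinv.const_mul _)).sub ((hinv.pow 2).const_mul _)
        rw [show -(((k : ℝ) + 1) * ((k : ℝ) + 2)) + 2 * (k : ℝ) * ((k : ℝ) + 2) * 0
            - ((k : ℝ) * ((k : ℝ) - 1) + a₁ k * t) * 0 ^ 2
            = -(((k : ℝ) + 1) * ((k : ℝ) + 2)) by ring] at hlim
        exact hlim.congr' heq
      -- limit of the last factor
      have hB : Tendsto (fun r : ℝ => (r ^ 2 / (t + r ^ 2)) ^ c) l (nhds 1) := by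
        have hbase : Tendsto (fun r : ℝ => r ^ 2 / (t + r ^ 2)) l (nhds 1) := by
          have heq : ∀ᶠ r in l, (1 + t * (r⁻¹) ^ 2)⁻¹ = r ^ 2 / (t + r ^ 2) := by
            filter_upwards [hne] with r hr
            have hr2 : r ^ 2 ≠ 0 := pow_ne_zero 2 hr
            field_simp
            ring
          have hlim : Tendsto (fun r : ℝ => (1 + t * (r⁻¹) ^ 2)⁻¹) l (nhds ((1 + t * 0 ^ 2)⁻¹)) := by
            apply Tendsto.inv₀
            · exact tendsto_const_nhds.add ((hinv.pow 2).const_mul t)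
            · norm_num
          rw [show ((1:ℝ) + t * 0 ^ 2)⁻¹ = 1 by norm_num] at hlim
          exact hlim.congr' heq
        have hcont : ContinuousAt (fun x : ℝ => x ^ c) 1 :=
          Real.continuousAt_rpow_const 1 c (Or.inl one_ne_zero)
        have := hcont.tendsto.comp hbase
        rwa [Real.one_rpow] at this
      -- combine
      have heqF : ∀ᶠ r in l, ((1 - t) / t) ^ c * ((a₀ k r - a₁ k * t) / r ^ 2)
          * (r ^ 2 / (t + r ^ 2)) ^ c = F r t := by
        filter_upwards [hne] with r hr
        exact (aux_F_eq k hr ⟨ht0, ht.2⟩).symm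
      have hlimG : Tendsto (fun r : ℝ => ((1 - t) / t) ^ c * ((a₀ k r - a₁ k * t) / r ^ 2)
          * (r ^ 2 / (t + r ^ 2)) ^ c) l
          (nhds (((1 - t) / t) ^ c * (-(((k : ℝ) + 1) * ((k : ℝ) + 2))) * 1)) :=
        (tendsto_const_nhds.mul hA).mul hB
      have : f t = ((1 - t) / t) ^ c * (-(((k : ℝ) + 1) * ((k : ℝ) + 2))) * 1 := by
        simp only [hfdef]; ring
      rw [this]
      exact hlimG.congr' heqF

theorem period_tendsto_at_infty (k : ℕ) (hk : 2 ≤ k) :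
    Tendsto (periodP k) atTop (nhds (Lval k)) ∧
    Tendsto (periodP k) atBot (nhds (Lval k)) ∧
    Lval k < 0 := by
  refine ⟨?_, ?_, ?_⟩
  · apply aux_tendsto k hk tendsto_inv_atTop_zero
    filter_upwards [eventually_ge_atTop (1:ℝ)] with r hr
    rw [abs_of_nonneg (by linarith)]; exact hr
  · apply aux_tendsto k hk aux_inv_atBot
    filter_upwards [eventually_le_atBot (-1:ℝ)] with r hr
    rw [abs_of_nonpos (by linarith)]; linarith
  · have hI : 0 < ∫ t in (0:ℝ)..1, ((1 - t) / t) ^ ((1 : ℝ) / ((k : ℝ) + 1)) := by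
      apply intervalIntegral_pos_of_pos_on (aux_h_integrable k hk)
      · intro x hx
        apply Real.rpow_pos_of_pos
        have h1 : 0 < 1 - x := by linarith [hx.2]
        exact div_pos h1 hx.1
      · norm_num
    have hpos : (0:ℝ) < ((k : ℝ) + 1) * ((k : ℝ) + 2) := by positivity
    rw [Lval]
    exact mul_neg_of_neg_of_pos (by linarith) hI
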